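/- arXiv:1608.06539 — 8 statements merged into one kernel-verified Lean document; each statement's English description precedes it below -/
import Mathlib

section
/- The kernel of the homomorphism D_v : Sym(G,v) → GL(kGv) consists exactly of the permutations π of G that map every left coset of the stabilizer H = G_v onto itself; in particular this kernel is isomorphic to the direct product of |G:H| copies of the symmetric group on H. -/
/-!
`D_v(π)` is the identity on `kGv` iff it fixes every orbit point, i.e. `π g • v = g • v` for all `g`.
Since `g • v` determines the coset `g H` (orbit–stabilizer), this says that `π` preserves every
fibre of `G → G ⧸ H`, i.e. maps each left coset of `H` onto itself. A permutation preserving the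
fibres of a map is the same as a family of permutations of the fibres, and every fibre of
`G → G ⧸ H` is in bijection with `H`.
-/

open Pointwise MulAction

namespace Equiv.Perm

variable {α ι : Type*}

def fiberPerms (f : α → ι) : Subgroup (Perm α) where
  carrier := {π | f ∘ π = f}
  one_mem' := rfl
  mul_mem' {a b} ha hb := by
    change f ∘ a ∘ b = f
    rw [← Function.comp_assoc, ha, hb]
  inv_mem' {a} ha := ((Equiv.comp_symm_eq a f f).mpr ha.symm : f ∘ a.symm = f)

theorem mem_fiberPerms {f : α → ι} {π : Perm α} : π ∈ fiberPerms f ↔ f ∘ π = f :=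
  Iff.rfl

theorem forall_image_preimage_singleton_eq_iff {f : α → ι} {π : Perm α} :
    (∀ a, π '' (f ⁻¹' {f a}) = f ⁻¹' {f a}) ↔ f ∘ π = f := by
  refine ⟨fun h => funext fun a => ?_, fun h a => ?_⟩
  · have : π a ∈ π '' (f ⁻¹' {f a}) := Set.mem_image_of_mem π rfl
    rwa [h a] at this
  · rw [Equiv.image_eq_preimage_symm, ← Set.preimage_comp, (Equiv.comp_symm_eq π f f).mpr h.symm]

-- `DomMulAct.mk` reverses products; passing to `ᵐᵒᵖ` makes the identification multiplicative.
def fiberPermsMulEquivStabilizerOp (f : α → ι) :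
    fiberPerms f ≃* (stabilizer (Perm α)ᵈᵐᵃ f)ᵐᵒᵖ where
  toFun π := .op ⟨DomMulAct.mk π, DomMulAct.mem_stabilizer_iff.mpr π.2⟩
  invFun σ := ⟨DomMulAct.mk.symm σ.unop, DomMulAct.mem_stabilizer_iff.mp σ.unop.2⟩
  left_inv _ := rfl
  right_inv _ := rfl
  map_mul' _ _ := rfl

def fiberPermsMulEquivPi (f : α → ι) : fiberPerms f ≃* ∀ i, Perm {a // f a = i} :=
  (fiberPermsMulEquivStabilizerOp f).trans (DomMulAct.stabilizerMulEquiv f)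

end Equiv.Perm

namespace QuotientGroup

variable {G : Type*} [Group G] (H : Subgroup G)

theorem leftCoset_eq_preimage_mk (g : G) :
    g • (H : Set G) = (QuotientGroup.mk : G → G ⧸ H) ⁻¹' {(g : G ⧸ H)} :=
  (eq_class_eq_leftCoset H g).symm

noncomputable def fiberMkEquivSubgroup (q : G ⧸ H) : {g : G // (g : G ⧸ H) = q} ≃ H :=
  (Equiv.subtypeEquivRight fun g => by rw [leftCoset_eq_preimage_mk, out_eq']; rfl).trans
    (Subgroup.leftCosetEquivSubgroup q.out)

noncomputable def fiberPermsMkMulEquiv :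
    Equiv.Perm.fiberPerms (QuotientGroup.mk : G → G ⧸ H) ≃* (G ⧸ H → Equiv.Perm H) :=
  (Equiv.Perm.fiberPermsMulEquivPi _).trans
    (MulEquiv.piCongrRight fun q => (fiberMkEquivSubgroup H q).permCongrHom)

end QuotientGroup

theorem MulAction.smul_eq_smul_iff_mk_eq {G α : Type*} [Group G] [MulAction G α] (x : α)
    {g g' : G} : g • x = g' • x ↔ (g : G ⧸ stabilizer G x) = g' := by
  rw [← (injective_ofQuotientStabilizer G x).eq_iff, ofQuotientStabilizer_mk,
    ofQuotientStabilizer_mk]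

theorem ker_Dv_eq_coset_perms_general
    {G V : Type*} [Group G]
    [AddCommGroup V] [DistribMulAction G V]
    (v : V) :
    (∀ π : Equiv.Perm G,
      (∀ g : G, π g • v = g • v) ↔
        (∀ g : G, ⇑π '' (g • (MulAction.stabilizer G v : Set G)) =
          g • (MulAction.stabilizer G v : Set G))) ∧
    ∃ K : Subgroup (Equiv.Perm G),
      ((K : Set (Equiv.Perm G)) = {π : Equiv.Perm G | ∀ g : G, π g • v = g • v}) ∧
      Nonempty (K ≃* ((G ⧸ MulAction.stabilizer G v) →
        Equiv.Perm (MulAction.stabilizer G v))) := by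
  set H := stabilizer G v
  have ker_iff (π : Equiv.Perm G) :
      (∀ g : G, π g • v = g • v) ↔ π ∈ Equiv.Perm.fiberPerms (QuotientGroup.mk : G → G ⧸ H) := by
    simp only [smul_eq_smul_iff_mk_eq, Equiv.Perm.mem_fiberPerms, funext_iff, Function.comp_apply]
    rfl
  refine ⟨fun π => ?_, _, Set.ext fun π => (ker_iff π).symm,
    ⟨QuotientGroup.fiberPermsMkMulEquiv H⟩⟩
  simp only [ker_iff, QuotientGroup.leftCoset_eq_preimage_mk,
    Equiv.Perm.forall_image_preimage_singleton_eq_iff, Equiv.Perm.mem_fiberPerms]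

/-- The kernel of `D_v : Sym(G,v) → GL(kGv)` consists exactly of the
permutations of `G` mapping every left coset of the stabilizer `H = G_v` onto itself,
and this kernel is isomorphic to a direct product of `|G:H|` copies of `Sym(H)`. -/
theorem ker_Dv_eq_coset_perms
    {k G V : Type*} [Field k] [Group G] [Finite G]
    [AddCommGroup V] [Module k V] [DistribMulAction G V] [SMulCommClass G k V]
    (v : V) :
    (∀ π : Equiv.Perm G,
      (∀ g : G, π g • v = g • v) ↔
        (∀ g : G, ⇑π '' (g • (MulAction.stabilizer G v : Set G)) =
          g • (MulAction.stabilizer G v : Set G))) ∧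
    ∃ K : Subgroup (Equiv.Perm G),
      ((K : Set (Equiv.Perm G)) = {π : Equiv.Perm G | ∀ g : G, π g • v = g • v}) ∧
      Nonempty (K ≃* ((G ⧸ MulAction.stabilizer G v) →
        Equiv.Perm (MulAction.stabilizer G v))) :=
  ker_Dv_eq_coset_perms_general v
end

section
/- If V = V₁ ⊕ ⋯ ⊕ Vₙ is a direct sum of kG-modules and V is cyclic (i.e., V = kGv for some v), then the intersection of the generic symmetry groups Sym(G,Vᵢ) is contained in Sym(G,V). -/
/-- If `V = V₁ ⊕ ⋯ ⊕ Vₙ` is a direct sum of `kG`-modules and `V` is cyclic,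
then `⋂ᵢ Sym(G,Vᵢ) ⊆ Sym(G,V)`. -/
theorem inter_generic_sym_subset_generic_sym_of_directSum
    {k G : Type*} [Field k] [Infinite k] [Group G] [Finite G]
    {n : ℕ} (V : Fin n → Type*) [∀ i, AddCommGroup (V i)] [∀ i, Module k (V i)]
    [∀ i, DistribMulAction G (V i)] [∀ i, SMulCommClass G k (V i)]
    (hcyc : ∃ v : ∀ i, V i, Submodule.span k (MulAction.orbit G v) = ⊤)
    (π : Equiv.Perm G)
    (hπ : ∀ i, ∀ w : V i, Submodule.span k (MulAction.orbit G w) = ⊤ →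
        ∃ A : V i ≃ₗ[k] V i, ∀ g : G, A (g • w) = π g • w) :
    ∀ v : ∀ i, V i, Submodule.span k (MulAction.orbit G v) = ⊤ →
      ∃ A : (∀ i, V i) ≃ₗ[k] (∀ i, V i), ∀ g : G, A (g • v) = π g • v := by
  intro v hv
  have hcomp : ∀ i, Submodule.span k (MulAction.orbit G (v i)) = ⊤ := by
    intro i
    have hsurj : Function.Surjective (LinearMap.proj (R := k) (φ := V) i) :=
      fun x => ⟨Function.update 0 i x, by simp⟩
    have hmap := Submodule.map_top (LinearMap.proj (R := k) (φ := V) i)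
    rw [LinearMap.range_eq_top.mpr hsurj, ← hv, Submodule.map_span] at hmap
    rw [eq_top_iff, ← hmap]
    apply Submodule.span_mono
    rintro _ ⟨_, ⟨g, rfl⟩, rfl⟩
    exact ⟨g, rfl⟩
  choose A hA using fun i => hπ i (v i) (hcomp i)
  refine ⟨LinearEquiv.piCongrRight A, fun g => ?_⟩
  funext i
  simp [hA i g]
end

section
/- For any fixed permutation π of G, the set of generators v ∈ Gen(V) for which π is an orbit symmetry with respect to v is relatively Zariski-closed in Gen(V). -/
/-!
Once the vectors `g • v` span `k^d`, the map `g • v ↦ π g • v` is well defined iff every linear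
relation among the `g • v` also holds among the `π g • v`. In terms of the matrix with columns
`(g • v, π g • v)` this says that all its `(d + 1)`-minors vanish, and these minors are polynomials
in `v`. For the converse, take `g₁, …, g_d` with `gᵢ • v` a basis: the minor on the columns
`g₁, …, g_d, g` and on the top rows together with the bottom row `t` gives a relation showing that
coordinate `t` of `π g • v` is that of `A (g • v)`, where `A (gᵢ • v) = π gᵢ • v`. Such an `A` is
onto, since the `π g • v` span, hence invertible.
-/

open MvPolynomial Matrix Module Submodule Set

section

variable {K : Type*} [Field K]

theorem Module.Basis.exists_basis_eq_comp_of_span_range_eq_top {V ι n : Type*} [AddCommGroup V]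
    [Module K V] (B : Basis ι K V) (u : n → V) (hu : span K (range u) = ⊤) :
    ∃ (b : Basis ι K V) (γ : ι → n), ⇑b = u ∘ γ := by
  let b₀ := Basis.ofSpan hu.ge
  let e := b₀.indexEquiv B
  have hmem (i : ι) : b₀ (e.symm i) ∈ range u := Basis.ofSpan_subset hu.ge ⟨_, rfl⟩
  choose γ hγ using hmem
  exact ⟨b₀.reindex e, γ, funext fun i => by simp [Basis.reindex_apply, hγ]⟩

theorem Module.Basis.constr_eq_of_linear_relation {ι V W : Type*} [Fintype ι] [AddCommGroup V]
    [Module K V] [AddCommGroup W] [Module K W] (b : Basis ι K V) (y : ι → W) {x : V} {z : W}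
    {c : Option ι → K} (hc : c ≠ 0)
    (hx : ∑ o, c o • Option.elim o x b = 0) (hz : ∑ o, c o • Option.elim o z y = 0) :
    b.constr K y x = z := by
  rw [Fintype.sum_option] at hx hz
  have hnone : c none ≠ 0 := by
    intro h0
    refine hc (funext fun o => ?_)
    cases o with
    | none => exact h0
    | some i =>
      simp only [h0, zero_smul, zero_add, Option.elim_some] at hx
      exact Fintype.linearIndependent_iff.1 b.linearIndependent _ hx i
  have hAx := congrArg (b.constr K y) hx
  simp only [map_add, map_smul, map_sum, Option.elim_some, Basis.constr_basis, map_zero] at hAx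
  exact smul_right_injective W hnone (add_right_cancel (hAx.trans hz.symm))

namespace Matrix

variable {R n m m' ι : Type*}

def stackCols (u : n → m → R) (w : n → m' → R) : Matrix (m ⊕ m') n R :=
  of fun i j => Sum.elim (u j) (w j) i

theorem submatrix_stackCols_mulVec [CommSemiring R] [Fintype ι] (u : n → m → R)
    (w : n → m' → R) (rows : ι → m ⊕ m') (cols : ι → n) (c : ι → R) (i : ι) :
    ((stackCols u w).submatrix rows cols *ᵥ c) i =
      Sum.elim (∑ j, c j • u (cols j)) (∑ j, c j • w (cols j)) (rows i) := by
  cases h : rows i <;>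
    simp [stackCols, mulVec, dotProduct, Finset.sum_apply, h, mul_comm]

variable [Fintype m] [Fintype ι] [DecidableEq ι] {u : n → m → K} {w : n → m' → K}

theorem det_submatrix_stackCols_eq_zero_of_linearMap (hι : Fintype.card m < Fintype.card ι)
    (A : (m → K) →ₗ[K] (m' → K)) (hA : ∀ j, A (u j) = w j) (rows : ι → m ⊕ m')
    (cols : ι → n) : ((stackCols u w).submatrix rows cols).det = 0 := by
  have hdep : ¬ LinearIndependent K (u ∘ cols) := fun hli => by
    simpa using hι.trans_le hli.fintype_card_le_finrank
  obtain ⟨c, hrel, j, hj⟩ := Fintype.not_linearIndependent_iff.1 hdep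
  have hu : ∑ j, c j • u (cols j) = 0 := hrel
  have hw : ∑ j, c j • w (cols j) = 0 := by
    simpa [← hA] using congrArg A hu
  refine exists_mulVec_eq_zero_iff.1 ⟨c, fun h => hj (congrFun h j), funext fun i => ?_⟩
  rw [submatrix_stackCols_mulVec]
  cases rows i <;> simp [hu, hw]

theorem exists_linearMap_of_det_submatrix_stackCols_eq_zero [DecidableEq m]
    (hu : span K (range u) = ⊤)
    (hdet : ∀ (rows : Option m → m ⊕ m') (cols : Option m → n),
      ((stackCols u w).submatrix rows cols).det = 0) :
    ∃ A : (m → K) →ₗ[K] (m' → K), ∀ j, A (u j) = w j := by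
  obtain ⟨b, γ, hb⟩ := (Pi.basisFun K m).exists_basis_eq_comp_of_span_range_eq_top u hu
  refine ⟨b.constr K (w ∘ γ), fun j => funext fun t => ?_⟩
  let rows : Option m → m ⊕ m' := fun o => o.elim (.inr t) .inl
  let cols : Option m → n := fun o => o.elim j γ
  obtain ⟨c, hc, hker⟩ := exists_mulVec_eq_zero_iff.2 (hdet rows cols)
  have hrow i := congrFun hker i
  simp only [submatrix_stackCols_mulVec, Pi.zero_apply] at hrow
  have hx : ∑ o, c o • Option.elim o (u j) b = 0 := funext fun t' => by
    simpa [rows, cols, hb, Finset.sum_apply] using hrow (some t')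
  have hz : ∑ o, c o • Option.elim o (w j t) (fun i => w (γ i) t) = 0 := by
    simpa [rows, cols, Finset.sum_apply] using hrow none
  have := b.constr_eq_of_linear_relation _ hc hx hz
  simpa [Basis.constr_apply, Finset.sum_apply] using this

end Matrix

end

theorem MvPolynomial.eval_toMvPolynomial_toMatrix' {R σ m : Type*} [CommRing R] [Fintype σ]
    [DecidableEq σ] (f : (σ → R) →ₗ[R] (m → R)) (i : m) (x : σ → R) :
    eval x ((LinearMap.toMatrix' f).toMvPolynomial i) = f x i := by
  rw [toMvPolynomial_eval_eq_apply, LinearMap.toMatrix'_mulVec]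

theorem Matrix.exists_setOf_det_submatrix_map_eval_eq_zero_eq_zeroLocus {R σ r n : Type*}
    (ι : Type*) [CommRing R] [Fintype ι] [DecidableEq ι] (P : Matrix r n (MvPolynomial σ R)) :
    ∃ S : Set (MvPolynomial σ R),
      {x : σ → R | ∀ (rows : ι → r) (cols : ι → n),
        ((P.map (eval x)).submatrix rows cols).det = 0} = {x | ∀ p ∈ S, eval x p = 0} := by
  refine ⟨range fun rc : (ι → r) × (ι → n) => (P.submatrix rc.1 rc.2).det, ?_⟩
  ext x
  simp only [Set.mem_ofPred_eq, Set.forall_mem_range, Prod.forall, submatrix_map,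
    ← RingHom.mapMatrix_apply, ← RingHom.map_det]

theorem orbit_sym_points_relatively_closed_general
    {k G : Type*} [Field k] [Group G] (d : ℕ)
    [DistribMulAction G (Fin d → k)] [SMulCommClass G k (Fin d → k)]
    (π : Equiv.Perm G) :
    ∃ S : Set (MvPolynomial (Fin d) k),
      {v : Fin d → k | Submodule.span k (MulAction.orbit G v) = ⊤ ∧
          ∃ A : (Fin d → k) ≃ₗ[k] (Fin d → k), ∀ g : G, A (g • v) = π g • v} =
        {v : Fin d → k | Submodule.span k (MulAction.orbit G v) = ⊤} ∩
          {v : Fin d → k | ∀ p ∈ S, MvPolynomial.eval v p = 0} := by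
  classical
  let ρ (g : G) := DistribSMul.toLinearMap k (Fin d → k) g
  let P := stackCols (fun g => (LinearMap.toMatrix' (ρ g)).toMvPolynomial)
    (fun g => (LinearMap.toMatrix' (ρ (π g))).toMvPolynomial)
  obtain ⟨S, hS⟩ := P.exists_setOf_det_submatrix_map_eval_eq_zero_eq_zeroLocus (Option (Fin d))
  refine ⟨S, ?_⟩
  rw [← hS]
  ext v
  have hP : P.map (eval v) = stackCols (fun g => g • v) (fun g => π g • v) := by
    ext (t | t) g
    · exact eval_toMvPolynomial_toMatrix' (ρ g) t v
    · exact eval_toMvPolynomial_toMatrix' (ρ (π g)) t v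
  simp only [Set.mem_ofPred_eq, Set.mem_inter_iff, hP]
  refine and_congr_right fun hspan => ⟨fun ⟨A, hA⟩ => ?_, fun hdet => ?_⟩
  · exact det_submatrix_stackCols_eq_zero_of_linearMap (by simp) A.toLinearMap hA
  · obtain ⟨A, hA⟩ := exists_linearMap_of_det_submatrix_stackCols_eq_zero hspan hdet
    have hsurj : Function.Surjective A := by
      rw [← LinearMap.range_eq_top, eq_top_iff, ← hspan, span_le]
      rintro _ ⟨g, rfl⟩
      exact ⟨π.symm g • v, by simp [hA]⟩
    exact ⟨.ofBijective A ⟨LinearMap.injective_iff_surjective.2 hsurj, hsurj⟩, hA⟩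

/-- For a fixed permutation `π` of `G`, the set of generators `v` for which
`π` is an orbit symmetry is relatively Zariski-closed in `Gen(V)`. -/
theorem orbit_sym_points_relatively_closed
    {k G : Type*} [Field k] [Infinite k] [Group G] [Finite G] (d : ℕ)
    [DistribMulAction G (Fin d → k)] [SMulCommClass G k (Fin d → k)]
    (π : Equiv.Perm G) :
    ∃ S : Set (MvPolynomial (Fin d) k),
      {v : Fin d → k | Submodule.span k (MulAction.orbit G v) = ⊤ ∧
          ∃ A : (Fin d → k) ≃ₗ[k] (Fin d → k), ∀ g : G, A (g • v) = π g • v} =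
        {v : Fin d → k | Submodule.span k (MulAction.orbit G v) = ⊤} ∩
          {v : Fin d → k | ∀ p ∈ S, MvPolynomial.eval v p = 0} :=
  orbit_sym_points_relatively_closed_general d π
end

section
/- If V is a cyclic kG-module over an infinite field k, then the set of generic points of V is non-empty and Zariski-open; in particular generic points exist. -/
/-- A point `v` is generic: it is a generator, its stabilizer equals the kernel of the
action, and every orbit symmetry of `v` is a generic symmetry. -/
def IsGenericPt (k G : Type*) [Field k] [Group G] {d : ℕ}
    [DistribMulAction G (Fin d → k)] [SMulCommClass G k (Fin d → k)]
    (v : Fin d → k) : Prop :=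
  Submodule.span k (MulAction.orbit G v) = ⊤ ∧
  MulAction.stabilizer G v = (MulAction.toPermHom G (Fin d → k)).ker ∧
  ∀ π : Equiv.Perm G,
    (∃ A : (Fin d → k) ≃ₗ[k] (Fin d → k), ∀ g : G, A (g • v) = π g • v) →
    ∀ w : Fin d → k, Submodule.span k (MulAction.orbit G w) = ⊤ →
      ∃ A : (Fin d → k) ≃ₗ[k] (Fin d → k), ∀ g : G, A (g • w) = π g • w

/-!
A point fails to be generic exactly when it lies in one of finitely many loci: the
non-generators, the fixed subspaces of the elements acting nontrivially, and, for each
permutation `π ∉ Sym(G, V)`, the points on whose orbit `π` is realized linearly. Each locus is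
cut out by polynomials in the coordinates of `v`: generation is the nonvanishing of some
`d × d` minor of orbit vectors, and an orbit symmetry is determined on such a minor, so by
Cramer's rule it is expressed through its adjugate and determinant. Each locus is proper
(by cyclicity, by the definition of the kernel, and by the choice of `π`), and over an
infinite field a finite union of proper Zariski-closed sets is proper, because a product of
nonzero polynomials is nonzero and so has a non-root.
-/

open MvPolynomial MulAction Matrix

section ZariskiClosed

variable {σ k : Type*} [CommRing k]

def IsZariskiClosed (s : Set (σ → k)) : Prop :=
  ∃ S : Set (MvPolynomial σ k), s = {v | ∀ p ∈ S, eval v p = 0}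

theorem isZariskiClosed_iUnion [IsDomain k] {ι : Type*} [Finite ι] {s : ι → Set (σ → k)}
    (hs : ∀ i, IsZariskiClosed (s i)) : IsZariskiClosed (⋃ i, s i) := by
  have := Fintype.ofFinite ι
  choose S hS using hs
  -- the union is cut out by the products of one equation of each `s i`
  refine ⟨(fun c => ∏ i, c i) '' Set.univ.pi S, Set.ext fun v => ?_⟩
  simp only [Set.mem_iUnion, hS, Set.mem_ofPred_eq, Set.forall_mem_image, map_prod,
    Finset.prod_eq_zero_iff, Finset.mem_univ, true_and]
  constructor
  · rintro ⟨i, hi⟩ c hc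
    exact ⟨i, hi _ (hc i trivial)⟩
  · intro h
    by_contra! hne
    choose c hcS hc using hne
    obtain ⟨i, hi⟩ := h (x := c) fun i _ => hcS i
    exact hc i hi

theorem IsZariskiClosed.exists_ne_zero {s : Set (σ → k)} (hs : IsZariskiClosed s)
    (hne : s ≠ Set.univ) : ∃ p : MvPolynomial σ k, p ≠ 0 ∧ ∀ v ∈ s, eval v p = 0 := by
  obtain ⟨S, rfl⟩ := hs
  obtain ⟨v, hv⟩ := Set.ne_univ_iff_exists_notMem _ |>.mp hne
  simp only [Set.mem_ofPred_eq, not_forall] at hv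
  obtain ⟨p, hpS, hpv⟩ := hv
  exact ⟨p, fun h => hpv (h ▸ map_zero _), fun w hw => hw p hpS⟩

def IsProperZariskiClosed (s : Set (σ → k)) : Prop :=
  IsZariskiClosed s ∧ s ≠ Set.univ

theorem IsProperZariskiClosed.iUnion [IsDomain k] [Infinite k] {ι : Type*} [Finite ι]
    {s : ι → Set (σ → k)} (hs : ∀ i, IsProperZariskiClosed (s i)) :
    IsProperZariskiClosed (⋃ i, s i) := by
  refine ⟨isZariskiClosed_iUnion fun i => (hs i).1, fun huniv => ?_⟩
  have := Fintype.ofFinite ι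
  choose p hp hps using fun i => (hs i).1.exists_ne_zero (hs i).2
  refine Finset.prod_ne_zero_iff.mpr (fun i _ => hp i) (MvPolynomial.funext fun v => ?_ :
    ∏ i, p i = 0)
  obtain ⟨i, hi⟩ := Set.mem_iUnion.mp (huniv.symm ▸ Set.mem_univ v)
  rw [map_prod, map_zero]
  exact Finset.prod_eq_zero (Finset.mem_univ i) (hps i v hi)

theorem IsProperZariskiClosed.union [IsDomain k] [Infinite k] {s t : Set (σ → k)}
    (hs : IsProperZariskiClosed s) (ht : IsProperZariskiClosed t) :
    IsProperZariskiClosed (s ∪ t) := by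
  rw [Set.union_eq_iUnion]
  exact .iUnion (Bool.forall_bool.mpr ⟨ht, hs⟩)

end ZariskiClosed

theorem MvPolynomial.eval_comp_map_C_mulVec_X {σ τ R : Type*} [Fintype σ] [CommRing R]
    (M : Matrix τ σ R) (v : σ → R) : eval v ∘ (M.map C *ᵥ X) = M *ᵥ v := by
  ext i
  rw [Function.comp_apply, RingHom.map_mulVec, Matrix.map_map]
  simp [Function.comp_def]

section OrbitMatrix

variable {k G : Type*} [Field k] [Group G] {d : ℕ} [MulAction G (Fin d → k)]

def orbitMatrix (v : Fin d → k) (f : Fin d → G) : Matrix (Fin d) (Fin d) k :=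
  Matrix.of fun i j => (f j • v) i

theorem span_orbit_eq_top_iff_exists_det_orbitMatrix_ne_zero (v : Fin d → k) :
    Submodule.span k (orbit G v) = ⊤ ↔ ∃ f : Fin d → G, (orbitMatrix v f).det ≠ 0 := by
  simp only [ne_eq, ← isUnit_iff_ne_zero, ← isUnit_iff_isUnit_det,
    ← linearIndependent_cols_iff_isUnit]
  constructor
  · intro hv
    obtain ⟨b, hbv, hb, hli⟩ := exists_linearIndependent k (orbit G v)
    let e := (Pi.basisFun k (Fin d)).indexEquiv (.mk hli (by rw [Subtype.range_coe, hb, hv]))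
    choose f hf using fun j => (hbv (e j).2 : _ ∈ orbit G v)
    have hcol : (orbitMatrix v f).col = Subtype.val ∘ e := funext fun j => hf j
    exact ⟨f, hcol ▸ hli.comp e e.injective⟩
  · rintro ⟨f, hf⟩
    refine eq_top_iff.mpr ((hf.span_eq_top_of_card_eq_finrank' (by simp)).ge.trans ?_)
    exact Submodule.span_mono (Set.range_subset_iff.mpr fun j => mem_orbit v (f j))

/-- `IsOrbitSymmetry π v` is the paper's `π ∈ Sym(G, v)`. -/
def IsOrbitSymmetry (π : Equiv.Perm G) (v : Fin d → k) : Prop :=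
  ∃ A : (Fin d → k) ≃ₗ[k] (Fin d → k), ∀ g : G, A (g • v) = π g • v

theorem isOrbitSymmetry_of_linearMap {π : Equiv.Perm G} {v : Fin d → k}
    (hv : Submodule.span k (orbit G v) = ⊤) (B : (Fin d → k) →ₗ[k] (Fin d → k))
    (hB : ∀ g : G, B (g • v) = π g • v) : IsOrbitSymmetry π v := by
  have hsurj : Function.Surjective B := by
    have horbit : Set.range (fun g => π g • v) = orbit G v :=
      π.surjective.range_comp fun g => g • v
    rw [← LinearMap.range_eq_top, eq_top_iff, ← hv, ← horbit, Submodule.span_le]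
    rintro _ ⟨g, rfl⟩
    exact ⟨g • v, hB g⟩
  exact ⟨.ofBijective B ⟨LinearMap.injective_iff_surjective.mpr hsurj, hsurj⟩, hB⟩

/-- When `orbitMatrix v f` is invertible, the only candidate for a linear map realizing `π` on
the orbit is `orbitMatrix v (π ∘ f) * (orbitMatrix v f)⁻¹`; the condition is written with the
adjugate and the determinant so that it is polynomial in `v`. -/
def symLocus (π : Equiv.Perm G) : Set (Fin d → k) :=
  {v | ∀ (f : Fin d → G) (g : G),
    (orbitMatrix v (π ∘ f) * (orbitMatrix v f).adjugate) *ᵥ (g • v) =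
      (orbitMatrix v f).det • (π g • v)}

theorem IsOrbitSymmetry.mem_symLocus {π : Equiv.Perm G} {v : Fin d → k}
    (h : IsOrbitSymmetry π v) : v ∈ symLocus π := by
  obtain ⟨A, hA⟩ := h
  intro f g
  have hmul : orbitMatrix v (π ∘ f) = LinearMap.toMatrix' A.toLinearMap * orbitMatrix v f := by
    ext i j
    rw [mul_apply, orbitMatrix, of_apply, Function.comp_apply, ← hA, ← LinearEquiv.coe_coe,
      ← LinearMap.toMatrix'_mulVec]
    rfl
  rw [hmul, Matrix.mul_assoc, mul_adjugate, Matrix.mul_smul, Matrix.mul_one, smul_mulVec,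
    LinearMap.toMatrix'_mulVec, LinearEquiv.coe_coe, hA]

theorem isOrbitSymmetry_of_mem_symLocus {π : Equiv.Perm G} {v : Fin d → k}
    (hv : Submodule.span k (orbit G v) = ⊤) (h : v ∈ symLocus π) : IsOrbitSymmetry π v := by
  obtain ⟨f, hf⟩ := (span_orbit_eq_top_iff_exists_det_orbitMatrix_ne_zero v).mp hv
  refine isOrbitSymmetry_of_linearMap hv
    (Matrix.toLin' ((orbitMatrix v f).det⁻¹ •
      (orbitMatrix v (π ∘ f) * (orbitMatrix v f).adjugate)))
    fun g => ?_
  rw [Matrix.toLin'_apply, smul_mulVec, h f g, smul_smul, inv_mul_cancel₀ hf, one_smul]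

end OrbitMatrix

section GenericOrbit

variable {k G : Type*} [Field k] [Group G] {d : ℕ}
  [DistribMulAction G (Fin d → k)] [SMulCommClass G k (Fin d → k)]

variable (k) in
noncomputable def genericOrbitVec (g : G) : Fin d → MvPolynomial (Fin d) k :=
  (LinearMap.toMatrix' (DistribSMul.toLinearMap k (Fin d → k) g)).map C *ᵥ X

theorem eval_comp_genericOrbitVec (v : Fin d → k) (g : G) :
    eval v ∘ genericOrbitVec k g = g • v := by
  rw [genericOrbitVec, eval_comp_map_C_mulVec_X, LinearMap.toMatrix'_mulVec,
    DistribSMul.toLinearMap_apply]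

variable (k) in
noncomputable def genericOrbitMatrix (f : Fin d → G) :
    Matrix (Fin d) (Fin d) (MvPolynomial (Fin d) k) :=
  Matrix.of fun i j => genericOrbitVec k (f j) i

theorem map_eval_genericOrbitMatrix (v : Fin d → k) (f : Fin d → G) :
    (genericOrbitMatrix k f).map (eval v) = orbitMatrix v f := by
  ext i j
  exact congrFun (eval_comp_genericOrbitVec v (f j)) i

theorem eval_det_genericOrbitMatrix (v : Fin d → k) (f : Fin d → G) :
    eval v (genericOrbitMatrix k f).det = (orbitMatrix v f).det := by
  rw [RingHom.map_det, RingHom.mapMatrix_apply, map_eval_genericOrbitMatrix]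

theorem isZariskiClosed_setOf_span_orbit_ne_top :
    IsZariskiClosed {v : Fin d → k | Submodule.span k (orbit G v) ≠ ⊤} := by
  refine ⟨Set.range fun f : Fin d → G => (genericOrbitMatrix k f).det, Set.ext fun v => ?_⟩
  simp [span_orbit_eq_top_iff_exists_det_orbitMatrix_ne_zero, eval_det_genericOrbitMatrix]

theorem isZariskiClosed_fixedBy (g : G) : IsZariskiClosed (fixedBy (Fin d → k) g) := by
  refine ⟨Set.range fun i => genericOrbitVec k g i - X i, Set.ext fun v => ?_⟩
  simp [funext_iff, sub_eq_zero, ← eval_comp_genericOrbitVec v g]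

variable (k) in
noncomputable def symLocusEquations (π : Equiv.Perm G) (f : Fin d → G) (g : G) :
    Fin d → MvPolynomial (Fin d) k :=
  (genericOrbitMatrix k (π ∘ f) * (genericOrbitMatrix k f).adjugate) *ᵥ genericOrbitVec k g -
    (genericOrbitMatrix k f).det • genericOrbitVec k (π g)

theorem eval_comp_symLocusEquations (v : Fin d → k) (π : Equiv.Perm G) (f : Fin d → G)
    (g : G) :
    eval v ∘ symLocusEquations k π f g =
      (orbitMatrix v (π ∘ f) * (orbitMatrix v f).adjugate) *ᵥ (g • v) -
        (orbitMatrix v f).det • (π g • v) := by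
  ext i
  have hadj : (genericOrbitMatrix k f).adjugate.map (eval v) = (orbitMatrix v f).adjugate := by
    rw [← RingHom.mapMatrix_apply, RingHom.map_adjugate, RingHom.mapMatrix_apply,
      map_eval_genericOrbitMatrix]
  simp only [symLocusEquations, Function.comp_apply, Pi.sub_apply, Pi.smul_apply, smul_eq_mul,
    map_sub, map_mul, RingHom.map_mulVec, Matrix.map_mul, hadj, map_eval_genericOrbitMatrix,
    eval_comp_genericOrbitVec, eval_det_genericOrbitMatrix]
  rw [← eval_comp_genericOrbitVec v (π g)]
  rfl

theorem isZariskiClosed_symLocus (π : Equiv.Perm G) :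
    IsZariskiClosed (symLocus π : Set (Fin d → k)) := by
  refine ⟨Set.range fun x : (Fin d → G) × G × Fin d => symLocusEquations k π x.1 x.2.1 x.2.2,
    Set.ext fun v => ?_⟩
  simp only [symLocus, Set.mem_ofPred_eq, Set.forall_mem_range, Prod.forall,
    ← sub_eq_zero (a := _ *ᵥ _), ← eval_comp_symLocusEquations, _root_.funext_iff]
  rfl

end GenericOrbit

section Generic

variable {k G : Type*} [Field k] [Group G] {d : ℕ}

theorem mem_ker_toPermHom_iff_fixedBy_eq_univ {α : Type*} [MulAction G α] {g : G} :
    g ∈ (toPermHom G α).ker ↔ fixedBy α g = Set.univ := by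
  simp [MonoidHom.mem_ker, Equiv.ext_iff, Set.eq_univ_iff_forall]

variable (k d) in
/-- `IsGenericSymmetry k d π` is the paper's `π ∈ Sym(G, V)`. -/
def IsGenericSymmetry [MulAction G (Fin d → k)] (π : Equiv.Perm G) : Prop :=
  ∀ w : Fin d → k, Submodule.span k (orbit G w) = ⊤ → IsOrbitSymmetry π w

theorem symLocus_ne_univ [MulAction G (Fin d → k)] {π : Equiv.Perm G}
    (hπ : ¬ IsGenericSymmetry k d π) : (symLocus π : Set (Fin d → k)) ≠ Set.univ := by
  intro huniv
  exact hπ fun w hw => isOrbitSymmetry_of_mem_symLocus hw (huniv ▸ Set.mem_univ w)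

variable [DistribMulAction G (Fin d → k)] [SMulCommClass G k (Fin d → k)]

theorem isGenericPt_iff {v : Fin d → k} :
    IsGenericPt k G v ↔ Submodule.span k (orbit G v) = ⊤ ∧
      stabilizer G v = (toPermHom G (Fin d → k)).ker ∧
      ∀ π : Equiv.Perm G, IsOrbitSymmetry π v → IsGenericSymmetry k d π :=
  Iff.rfl

theorem setOf_not_isGenericPt :
    {v | ¬ IsGenericPt k G v} =
      {v | Submodule.span k (orbit G v) ≠ ⊤} ∪
        ((⋃ g : {g : G // g ∉ (toPermHom G (Fin d → k)).ker}, fixedBy (Fin d → k) (g : G)) ∪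
          ⋃ π : {π : Equiv.Perm G // ¬ IsGenericSymmetry k d π},
            symLocus (π : Equiv.Perm G)) := by
  ext v
  have hstab : stabilizer G v = (toPermHom G (Fin d → k)).ker ↔
      ∀ g : G, g • v = v → g ∈ (toPermHom G (Fin d → k)).ker := by
    refine ⟨fun h g hg => h ▸ hg, fun h => le_antisymm h fun g hg => ?_⟩
    rw [mem_ker_toPermHom_iff_fixedBy_eq_univ] at hg
    exact (hg ▸ Set.mem_univ v : v ∈ fixedBy (Fin d → k) g)
  by_cases hv : Submodule.span k (orbit G v) = ⊤
  · have hsym (π : Equiv.Perm G) : IsOrbitSymmetry π v ↔ v ∈ symLocus π :=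
      ⟨IsOrbitSymmetry.mem_symLocus, isOrbitSymmetry_of_mem_symLocus hv⟩
    simp only [isGenericPt_iff, hv, hstab, hsym, Set.mem_ofPred_eq, Set.mem_union, Set.mem_iUnion,
      Subtype.exists, mem_fixedBy, exists_prop]
    grind
  · simp [isGenericPt_iff, hv]

end Generic

/-- If `V = k^d` is a cyclic `kG`-module over an infinite field, then the
set of generic points is non-empty and Zariski-open. -/
theorem generic_points_nonempty_open
    {k G : Type*} [Field k] [Infinite k] [Group G] [Finite G] (d : ℕ)
    [DistribMulAction G (Fin d → k)] [SMulCommClass G k (Fin d → k)]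
    (hcyc : ∃ v : Fin d → k, Submodule.span k (MulAction.orbit G v) = ⊤) :
    (∃ v : Fin d → k, IsGenericPt k G v) ∧
    ∃ S : Set (MvPolynomial (Fin d) k),
      {v : Fin d → k | ¬ IsGenericPt k G v} =
        {v : Fin d → k | ∀ p ∈ S, MvPolynomial.eval v p = 0} := by
  have hgen : IsProperZariskiClosed {v : Fin d → k | Submodule.span k (orbit G v) ≠ ⊤} :=
    ⟨isZariskiClosed_setOf_span_orbit_ne_top,
      (Set.ne_univ_iff_exists_notMem _).mpr (hcyc.imp fun _ hv h => h hv)⟩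
  have hfix : IsProperZariskiClosed
      (⋃ g : {g : G // g ∉ (toPermHom G (Fin d → k)).ker}, fixedBy (Fin d → k) (g : G)) :=
    .iUnion fun g =>
      ⟨isZariskiClosed_fixedBy _, mt mem_ker_toPermHom_iff_fixedBy_eq_univ.mpr g.2⟩
  have hsym : IsProperZariskiClosed
      (⋃ π : {π : Equiv.Perm G // ¬ IsGenericSymmetry k d π}, symLocus (π : Equiv.Perm G)) :=
    .iUnion fun π => ⟨isZariskiClosed_symLocus _, symLocus_ne_univ π.2⟩
  obtain ⟨hclosed, hne⟩ : IsProperZariskiClosed {v : Fin d → k | ¬ IsGenericPt k G v} := by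
    rw [setOf_not_isGenericPt]
    exact hgen.union (hfix.union hsym)
  obtain ⟨v, hv⟩ := (Set.ne_univ_iff_exists_notMem _).mp hne
  exact ⟨⟨v, not_not.mp hv⟩, hclosed⟩
end

section
/- Let Ĝ = GL(Gv) be the linear symmetry group of the orbit of a generator v, and let w ∈ V be generic with respect to the action of Ĝ. If the characteristic of k does not divide the order of the stabilizer of v in Ĝ, then GL(Ĝw) = Ĝ; i.e., taking the linear symmetry group of a generic orbit of Ĝ gives back Ĝ. -/
open Polynomial

/-!
A linear map `B` permuting `Ĝw` induces, since `Ĝ` acts freely on `Ĝw`, a permutation `π` of `Ĝ`.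
By genericity `π` is also realised on `Ĝv` by some `b`, and `b ∈ Ĝ` because `Ĝv = Gv`. The
permutation `σ = b⁻¹π` fixes every `Av`, and is realised on the orbit of `v + c • w` by some `D_c`
whenever that orbit spans, which happens for all but finitely many `c`. If `Av = A'v`, then
`D_c (Aw - A'w) = σ(A)w - σ(A')w`; writing `D_c = (1 + c Z)(1 + c T)⁻¹` and clearing the
denominator with the adjugate makes this a polynomial identity in `c`, which at `c = 0` says that
`σ(A)w - Aw` is constant on the coset `A • Stab(v)`. Since `σ` permutes that coset, the sum over
it vanishes, so `|Stab(v)| • (σ(A)w - Aw) = 0`. Hence `σ` fixes `Ĝw` pointwise and `B = b ∈ Ĝ`.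
-/

namespace Matrix

variable {k ι : Type*} [Field k] [Fintype ι] [DecidableEq ι]

theorem mapMatrix_evalRingHom_one_add_X_smul (A : Matrix ι ι k) (c : k) :
    (evalRingHom c).mapMatrix (1 + (X : k[X]) • A.map C) = 1 + c • A := by
  ext i j
  by_cases h : i = j <;> simp [h] <;> ring

theorem eq_of_infinite_setOf_exists_one_add_smul_mulVec (A B : Matrix ι ι k) (y s : ι → k)
    (h : {c : k | ∃ x, (1 + c • A) *ᵥ x = y ∧ (1 + c • B) *ᵥ x = s}.Infinite) : y = s := by
  set P : Matrix ι ι k[X] := 1 + (X : k[X]) • A.map C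
  set Q : Matrix ι ι k[X] := 1 + (X : k[X]) • B.map C
  set F : ι → k[X] := (Q * P.adjugate) *ᵥ (C ∘ y) - P.det • (C ∘ s)
  have hF : ∀ c i, (F i).eval c =
      (((1 + c • B) * (1 + c • A).adjugate) *ᵥ y) i - (1 + c • A).det * s i := by
    intro c i
    have hmul := RingHom.map_mulVec (evalRingHom c) (Q * P.adjugate) (C ∘ y) i
    rw [← RingHom.mapMatrix_apply, map_mul, RingHom.map_adjugate,
      mapMatrix_evalRingHom_one_add_X_smul, mapMatrix_evalRingHom_one_add_X_smul] at hmul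
    have hdet := RingHom.map_det (evalRingHom c) P
    rw [mapMatrix_evalRingHom_one_add_X_smul] at hdet
    simp only [F, Pi.sub_apply, Pi.smul_apply, smul_eq_mul, eval_sub, eval_mul]
    rw [← coe_evalRingHom, hmul, hdet]
    simp [Function.comp_def]
  -- at `c = 0` the vector `F` evaluates to `y - s`; on `h` it vanishes since `adj M * M = det M`
  have hF_eq_zero : F = 0 := funext fun i => by
    refine eq_zero_of_infinite_isRoot _ (h.mono ?_)
    rintro c ⟨x, rfl, rfl⟩
    rw [Set.mem_ofPred_eq, IsRoot, hF c i, ← mulVec_mulVec, mulVec_mulVec x,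
      adjugate_mul, smul_mulVec, one_mulVec, mulVec_smul, Pi.smul_apply, smul_eq_mul, sub_self]
  exact funext fun i => by simpa [sub_eq_zero, hF_eq_zero] using (hF 0 i).symm

end Matrix

open Set Finsupp Matrix

section LinearAlgebra

variable {k V : Type*} [Field k] [AddCommGroup V] [Module k V]

theorem Finsupp.linearCombination_add_smul_comp_rightInverse {ι : Type*} {a : ι → V}
    {R : V →ₗ[k] ι →₀ k}
    (hR : linearCombination k a ∘ₗ R = LinearMap.id) (c : k) (b : ι → V) :
    linearCombination k (fun i => a i + c • b i) ∘ₗ R = 1 + c • (linearCombination k b ∘ₗ R) := by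
  have : linearCombination k (fun i => a i + c • b i) =
      linearCombination k a + c • linearCombination k b := by
    ext i
    simp
  rw [this, LinearMap.add_comp, hR, LinearMap.smul_comp]
  rfl

variable [FiniteDimensional k V]

theorem Module.End.eq_of_infinite_setOf_exists_one_add_smul_apply (T Z : Module.End k V) (y s : V)
    (h : {c : k | ∃ x, (1 + c • T) x = y ∧ (1 + c • Z) x = s}.Infinite) : y = s := by
  let b := Module.finBasis k V
  have hmat : ∀ (L : Module.End k V) (c : k) (x : V),
      (1 + c • LinearMap.toMatrix b b L) *ᵥ b.repr x = b.repr ((1 + c • L) x) := by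
    intro L c x
    rw [← LinearMap.toMatrix_one b, ← map_smul, ← map_add, LinearMap.toMatrix_mulVec_repr]
  refine b.repr.injective (DFunLike.coe_injective
    (Matrix.eq_of_infinite_setOf_exists_one_add_smul_mulVec (LinearMap.toMatrix b b T)
      (LinearMap.toMatrix b b Z) _ _ (h.mono ?_)))
  rintro c ⟨x, rfl, rfl⟩
  exact ⟨b.repr x, hmat T c x, hmat Z c x⟩

theorem Module.End.finite_setOf_not_surjective_one_add_smul (T : Module.End k V) :
    {c : k | ¬ Function.Surjective (1 + c • T : Module.End k V)}.Finite := by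
  refine ((Module.End.finite_hasEigenvalue T).image fun μ => -μ⁻¹).subset ?_
  intro c hc
  rw [Set.mem_ofPred_eq, ← LinearMap.injective_iff_surjective, injective_iff_map_eq_zero] at hc
  push Not at hc
  obtain ⟨x, hx, hx0⟩ := hc
  have hc0 : c ≠ 0 := by
    rintro rfl
    simp [hx0] at hx
  refine ⟨-c⁻¹, Module.End.hasEigenvalue_of_hasEigenvector ⟨?_, hx0⟩, by simp⟩
  rw [Module.End.mem_eigenspace_iff]
  have hTx : c • T x = -x := eq_neg_of_add_eq_zero_right (by simpa using hx)
  rw [neg_smul, ← smul_neg, ← hTx, smul_smul, inv_mul_cancel₀ hc0, one_smul]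

variable [Infinite k]

theorem sub_eq_sub_of_forall_exists_linearMap {ι : Type*} {a b : ι → V}
    (ha : Submodule.span k (range a) = ⊤) {σ : Equiv.Perm ι} (hσa : ∀ i, a (σ i) = a i)
    (hσ : ∀ c : k, Submodule.span k (range fun i => a i + c • b i) = ⊤ →
      ∃ D : Module.End k V, ∀ i, D (a i + c • b i) = a (σ i) + c • b (σ i))
    {i j : ι} (hij : a i = a j) : b (σ i) - b (σ j) = b i - b j := by
  -- through a right inverse `R` of `linearCombination k a`, the family `a + c • b` becomes
  -- `1 + c • T`, and a map `D` realising `σ` on it satisfies `D ∘ (1 + c • T) = 1 + c • Z`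
  obtain ⟨R, hR⟩ := (linearCombination k a).exists_rightInverse_of_surjective
    (by rwa [range_linearCombination])
  set T := linearCombination k b ∘ₗ R
  set Z := linearCombination k (b ∘ σ) ∘ₗ R
  refine (Module.End.eq_of_infinite_setOf_exists_one_add_smul_apply T Z _ _ ?_).symm
  refine (((Module.End.finite_setOf_not_surjective_one_add_smul T).union
    (finite_singleton 0)).infinite_compl).mono ?_
  intro c hc
  simp only [mem_compl_iff, mem_union, mem_ofPred_eq, mem_singleton_iff, not_or, not_not] at hc
  obtain ⟨hsurj, hc0⟩ := hc
  have hspan : Submodule.span k (range fun i => a i + c • b i) = ⊤ := by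
    rw [← range_linearCombination, LinearMap.range_eq_top]
    rw [← Finsupp.linearCombination_add_smul_comp_rightInverse hR, LinearMap.coe_comp] at hsurj
    exact hsurj.of_comp
  obtain ⟨D, hD⟩ := hσ c hspan
  have hDT : D ∘ₗ (1 + c • T) = 1 + c • Z := by
    rw [← Finsupp.linearCombination_add_smul_comp_rightInverse hR,
      ← Finsupp.linearCombination_add_smul_comp_rightInverse hR, ← LinearMap.comp_assoc,
      ← linearCombination_linear_comp]
    congr 2
    ext i
    simp [hD, hσa]
  have hDb : D (b i - b j) = b (σ i) - b (σ j) := by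
    refine smul_right_injective V hc0 ?_
    calc c • D (b i - b j) = D ((a i + c • b i) - (a j + c • b j)) := by
          rw [hij, add_sub_add_left_eq_sub, ← smul_sub, map_smul]
      _ = c • (b (σ i) - b (σ j)) := by
          rw [map_sub, hD, hD, hσa, hσa, hij, add_sub_add_left_eq_sub, smul_sub]
  obtain ⟨x, hx⟩ := hsurj (b i - b j)
  exact ⟨x, hx, by rw [← hDb, ← hx, ← LinearMap.comp_apply, hDT]⟩

end LinearAlgebra

theorem apply_perm_eq_of_sub_const_on_fibers {k ι X W : Type*} [Field k] [AddCommGroup W]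
    [Module k W] {p : ι → X} {q : ι → W} {σ : Equiv.Perm ι} (hσp : ∀ i, p (σ i) = p i)
    (hq : ∀ i j, p i = p j → q (σ i) - q (σ j) = q i - q j) (i : ι)
    (hcard : (Nat.card {j // p j = p i} : k) ≠ 0) : q (σ i) = q i := by
  -- `Nat.card` of an infinite type is `0`, so `hcard` also makes the fiber finite
  have : Finite {j // p j = p i} := (Nat.card_ne_zero.mp fun h => by simp [h] at hcard).2
  have := Fintype.ofFinite {j // p j = p i}
  have hsum : ∑ j : {j // p j = p i}, (q (σ j) - q j) = 0 := by
    rw [Finset.sum_sub_distrib, sub_eq_zero]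
    exact Equiv.sum_comp
      (σ.subtypeEquiv (p := fun j => p j = p i) (q := fun j => p j = p i) fun j => by rw [hσp])
      (fun j => q j)
  have hterm : ∀ j : {j // p j = p i}, q (σ j) - q j = q (σ i) - q i := fun j =>
    sub_eq_sub_iff_sub_eq_sub.mp (hq j i j.2)
  rw [Finset.sum_congr rfl fun j _ => hterm j, Finset.sum_const, Finset.card_univ,
    ← Nat.card_eq_fintype_card, ← Nat.cast_smul_eq_nsmul k] at hsum
  exact sub_eq_zero.mp ((smul_eq_zero.mp hsum).resolve_left hcard)

theorem Set.image_range_eq_of_apply_eq_perm {ι X : Type*} {f : X → X} {p : ι → X}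
    {π : Equiv.Perm ι} (h : ∀ i, f (p i) = p (π i)) : f '' range p = range p := by
  rw [← range_comp, show f ∘ p = p ∘ π from funext h, π.surjective.range_comp]

theorem Set.exists_perm_apply_eq_of_image_range_eq {ι X : Type*} {p : ι → X} (hp : p.Injective)
    {f : X → X} (hf : f.Injective) (h : f '' range p = range p) :
    ∃ π : Equiv.Perm ι, ∀ i, f (p i) = p (π i) := by
  have hbij : BijOn f (range p) (range p) := by
    simpa only [h] using hf.injOn.bijOn_image (s := range p)
  let e := Equiv.ofInjective p hp
  refine ⟨(e.trans (hbij.equiv f)).trans e.symm, fun i => ?_⟩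
  simp [e, Equiv.apply_ofInjective_symm, BijOn.equiv]

section LinearGroup

variable {k V : Type*} [Field k] [AddCommGroup V] [Module k V]

def orbitSym (Γ : Subgroup (V ≃ₗ[k] V)) (u : V) : Set (Equiv.Perm Γ) :=
  {π | ∃ B : V ≃ₗ[k] V, ∀ A : Γ, B ((A : V ≃ₗ[k] V) u) = ((π A : Γ) : V ≃ₗ[k] V) u}

theorem perm_apply_eq_of_forall_mem_orbitSym [Infinite k] [FiniteDimensional k V]
    {Γ : Subgroup (V ≃ₗ[k] V)} {v : V}
    (hv : Submodule.span k (range fun A : Γ => (A : V ≃ₗ[k] V) v) = ⊤)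
    (hchar : (Nat.card {A : Γ // (A : V ≃ₗ[k] V) v = v} : k) ≠ 0) {σ : Equiv.Perm Γ}
    (hσv : ∀ A, ((σ A : Γ) : V ≃ₗ[k] V) v = (A : V ≃ₗ[k] V) v)
    (hσ : ∀ u, Submodule.span k (range fun A : Γ => (A : V ≃ₗ[k] V) u) = ⊤ → σ ∈ orbitSym Γ u)
    (w : V) (A : Γ) : ((σ A : Γ) : V ≃ₗ[k] V) w = (A : V ≃ₗ[k] V) w := by
  have hfiber : {B : Γ // (B : V ≃ₗ[k] V) v = (A : V ≃ₗ[k] V) v} ≃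
      {C : Γ // (C : V ≃ₗ[k] V) v = v} :=
    (Equiv.mulLeft A⁻¹).subtypeEquiv fun B => (A : V ≃ₗ[k] V).symm_apply_eq.symm
  refine apply_perm_eq_of_sub_const_on_fibers (p := fun B : Γ => (B : V ≃ₗ[k] V) v)
    (q := fun B : Γ => (B : V ≃ₗ[k] V) w) hσv (fun i j hij => ?_) A
    (by rwa [Nat.card_congr hfiber])
  refine sub_eq_sub_of_forall_exists_linearMap (b := fun B : Γ => (B : V ≃ₗ[k] V) w) hv hσv
    (fun c hc => ?_) hij
  obtain ⟨D, hD⟩ := hσ (v + c • w) (by simpa only [map_add, map_smul] using hc)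
  exact ⟨D, fun B => by simpa only [LinearEquiv.coe_coe, map_add, map_smul] using hD B⟩

theorem range_apply_eq_orbit {G : Type*} [Group G] [DistribMulAction G V] [SMulCommClass G k V]
    {v : V} {Γ : Subgroup (V ≃ₗ[k] V)}
    (hΓ : (Γ : Set (V ≃ₗ[k] V)) =
      {A : V ≃ₗ[k] V | ⇑A '' MulAction.orbit G v = MulAction.orbit G v}) :
    range (fun A : Γ => (A : V ≃ₗ[k] V) v) = MulAction.orbit G v := by
  apply Subset.antisymm
  · rintro _ ⟨A, rfl⟩
    have hA : ⇑(A : V ≃ₗ[k] V) '' MulAction.orbit G v = MulAction.orbit G v := by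
      have := A.2
      rwa [← SetLike.mem_coe, hΓ] at this
    exact hA ▸ mem_image_of_mem _ (MulAction.mem_orbit_self v)
  · rintro _ ⟨g, rfl⟩
    have hg : DistribMulAction.toLinearEquiv k V g ∈ Γ := by
      rw [← SetLike.mem_coe, hΓ]
      exact MulAction.smul_orbit g v
    exact ⟨⟨_, hg⟩, rfl⟩

end LinearGroup

/-- Let `Ĝ = GL(Gv)` be the linear symmetry group of the orbit of a
generator `v`, and let `w` be generic for `Ĝ`. If the characteristic of `k` does not
divide the order of the stabilizer of `v` in `Ĝ`, then `GL(Ĝw) = Ĝ`. -/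
theorem linear_sym_group_of_generic_orbit_eq
    {k G V : Type*} [Field k] [Infinite k] [Group G] [Finite G]
    [AddCommGroup V] [Module k V] [DistribMulAction G V] [SMulCommClass G k V]
    (v : V) (hv : Submodule.span k (MulAction.orbit G v) = ⊤)
    (Ghat : Subgroup (V ≃ₗ[k] V))
    (hGhat : (Ghat : Set (V ≃ₗ[k] V)) =
      {A : V ≃ₗ[k] V | ⇑A '' MulAction.orbit G v = MulAction.orbit G v})
    (w : V)
    -- `w` generates `V` as a module for `Ĝ`:
    (hwgen : Submodule.span k (Set.range fun A : Ghat => (A : V ≃ₗ[k] V) w) = ⊤)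
    -- the stabilizer of `w` in `Ĝ` equals the kernel of the `Ĝ`-action (trivial):
    (hwstab : ∀ A : Ghat, (A : V ≃ₗ[k] V) w = w → A = 1)
    -- every orbit symmetry of `w` (for `Ĝ`) is a generic symmetry:
    (hwsym : ∀ π : Equiv.Perm Ghat,
      (∃ B : V ≃ₗ[k] V, ∀ A : Ghat,
          B ((A : V ≃ₗ[k] V) w) = ((π A : Ghat) : V ≃ₗ[k] V) w) →
      ∀ u : V, Submodule.span k (Set.range fun A : Ghat => (A : V ≃ₗ[k] V) u) = ⊤ →
        ∃ B : V ≃ₗ[k] V, ∀ A : Ghat,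
          B ((A : V ≃ₗ[k] V) u) = ((π A : Ghat) : V ≃ₗ[k] V) u)
    -- the characteristic of `k` does not divide the order of the stabilizer of `v` in `Ĝ`:
    (hchar : (Nat.card {A : Ghat // (A : V ≃ₗ[k] V) v = v} : k) ≠ 0) :
    {B : V ≃ₗ[k] V |
        ⇑B '' (Set.range fun A : Ghat => (A : V ≃ₗ[k] V) w) =
          Set.range fun A : Ghat => (A : V ≃ₗ[k] V) w} =
      (Ghat : Set (V ≃ₗ[k] V)) := by
  have hrange := range_apply_eq_orbit hGhat
  have hmem : ∀ B : V ≃ₗ[k] V, B ∈ Ghat ↔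
      ⇑B '' range (fun A : Ghat => (A : V ≃ₗ[k] V) v) = range fun A : Ghat => (A : V ≃ₗ[k] V) v :=
    fun B => by rw [← SetLike.mem_coe, hGhat, hrange, mem_ofPred_eq]
  have hspan : Submodule.span k (range fun A : Ghat => (A : V ≃ₗ[k] V) v) = ⊤ := hrange ▸ hv
  have : FiniteDimensional k V :=
    Module.finite_def.mpr
      ⟨(Set.finite_range fun g : G => g • v).toFinset, by rwa [Finite.coe_toFinset]⟩
  have hwinj : Function.Injective fun A : Ghat => (A : V ≃ₗ[k] V) w := fun A₁ A₂ h =>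
    (inv_mul_eq_one.mp (hwstab _ ((A₂ : V ≃ₗ[k] V).symm_apply_eq.mpr h))).symm
  ext B
  refine ⟨fun hB => ?_, fun hB => image_range_eq_of_apply_eq_perm
    (π := Equiv.mulLeft ⟨B, hB⟩) fun A => rfl⟩
  obtain ⟨π, hπ⟩ := exists_perm_apply_eq_of_image_range_eq hwinj B.injective hB
  obtain ⟨B', hB'⟩ := hwsym π ⟨B, hπ⟩ v hspan
  have hB'mem : B' ∈ Ghat := (hmem B').2 (image_range_eq_of_apply_eq_perm hB')
  let σ := π.trans (Equiv.mulLeft (⟨B', hB'mem⟩ : Ghat)⁻¹)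
  have hσv : ∀ A, ((σ A : Ghat) : V ≃ₗ[k] V) v = (A : V ≃ₗ[k] V) v := fun A =>
    B'.symm_apply_eq.mpr (hB' A).symm
  have hσw : σ ∈ orbitSym Ghat w := ⟨B.trans B'.symm, fun A => congrArg B'.symm (hπ A)⟩
  have hσ := perm_apply_eq_of_forall_mem_orbitSym hspan hchar hσv (hwsym σ hσw) w
  have hBB' : B = B' := LinearEquiv.toLinearMap_injective <| LinearMap.ext_on_range hwgen fun A =>
    calc B ((A : V ≃ₗ[k] V) w) = ((π A : Ghat) : V ≃ₗ[k] V) w := hπ A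
      _ = B' (((σ A : Ghat) : V ≃ₗ[k] V) w) := (B'.apply_symm_apply _).symm
      _ = B' ((A : V ≃ₗ[k] V) w) := by rw [hσ A]
  exact hBB' ▸ hB'mem
end

section
/- For a generic symmetry π ∈ Sym(G,V), the trace of D_v(π) is independent of the choice of the generator v ∈ Gen(V); that is, the character of the representation D_v restricted to Sym(G,V) does not depend on v. -/
/-!
Since `G` is finite, `π` has some finite order `m`. An orbit symmetry `D` at a generator then
satisfies `D ^ m = 1`, so its trace lies in the finite set of sums of `dim V` roots of unity of
order `m`. Along the line `t ↦ (1 - t) • v + t • w`, Cramer's rule writes the trace of the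
symmetry at the point `t` as `p(t) / q(t)` for polynomials `p`, `q`, wherever `q(t) ≠ 0` (and
there the point is a generator). A rational function with finitely many values on an infinite set
is constant, so the trace is constant near `v` and constant near `w`; the two constants agree at a
common point of the line.
-/

open Polynomial Module AffineMap

section Finiteness

variable {K V : Type*} [Field K] [AddCommGroup V] [Module K V]

lemma Module.End.pow_eq_one_of_hasEigenvalue {f : End K V} {n : ℕ} (hf : f ^ n = 1) {μ : K}
    (hμ : f.HasEigenvalue μ) : μ ^ n = 1 := by
  obtain ⟨x, hx⟩ := (hμ.pow n).exists_hasEigenvector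
  rw [hf] at hx
  exact smul_left_injective K hx.2 (by simpa using hx.apply_eq_smul.symm)

theorem Module.End.finite_trace_of_pow_eq_one [FiniteDimensional K V] {n : ℕ} (hn : n ≠ 0) :
    (LinearMap.trace K V '' {f | f ^ n = 1}).Finite := by
  let Ω := AlgebraicClosure K
  let F := nthRootsFinset n (1 : Ω)
  refine ((Set.finite_range fun s : Sym F (finrank K V) => (s.1.map (↑)).sum).preimage
    (algebraMap K Ω).injective.injOn).subset ?_
  rintro _ ⟨f, hf, rfl⟩
  let fΩ := f.baseChange Ω
  have hsplit : fΩ.charpoly.Splits := IsAlgClosed.splits _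
  have hfΩ : fΩ ^ n = 1 := by
    rw [← LinearMap.baseChange_pow, hf]
    exact LinearMap.baseChange_one K V
  have hroots : ∀ μ ∈ fΩ.charpoly.roots, μ ∈ F := fun μ hμ =>
    (mem_nthRootsFinset (Nat.pos_of_ne_zero hn) _).2 <| pow_eq_one_of_hasEigenvalue hfΩ
      ((hasEigenvalue_iff_isRoot_charpoly _ _).2 (isRoot_of_mem_roots hμ))
  have hcard : fΩ.charpoly.roots.card = finrank K V := by
    rw [splits_iff_card_roots.1 hsplit, LinearMap.charpoly_natDegree, finrank_baseChange]
  lift fΩ.charpoly.roots to Multiset F using hroots with s hs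
  refine ⟨⟨s, by simpa [← hs] using hcard⟩, ?_⟩
  simp [← LinearMap.trace_baseChange, trace_eq_sum_roots_charpoly_of_splits hsplit, hs, fΩ]

end Finiteness

section OrbitSymmetry

variable {K V G : Type*} [Field K] [AddCommGroup V] [Module K V] [Group G] [MulAction G V]

lemma Module.End.pow_apply_smul {π : Equiv.Perm G} {u : V} {f : End K V}
    (hf : ∀ g : G, f (g • u) = π g • u) (n : ℕ) (g : G) : (f ^ n) (g • u) = (π ^ n) g • u := by
  induction n generalizing g with
  | zero => simp
  | succ n ih => rw [pow_succ, Module.End.mul_apply, hf, ih, pow_succ, Equiv.Perm.mul_apply]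

lemma Module.End.pow_eq_one_of_span_orbit_eq_top {π : Equiv.Perm G} {u : V} {f : End K V}
    (hu : Submodule.span K (MulAction.orbit G u) = ⊤) (hf : ∀ g : G, f (g • u) = π g • u)
    {n : ℕ} (hπ : π ^ n = 1) : f ^ n = 1 :=
  LinearMap.ext_on hu <| by
    rintro _ ⟨g, rfl⟩
    simp [pow_apply_smul hf, hπ]

end OrbitSymmetry

namespace Matrix

variable {n R : Type*} [CommRing R]

noncomputable def lineMapPoly (P Q : Matrix n n R) : Matrix n n R[X] :=
  P.map C + (X : R[X]) • (Q - P).map C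

lemma map_eval_lineMapPoly (P Q : Matrix n n R) (t : R) :
    (lineMapPoly P Q).map (eval t) = lineMap P Q t := by
  ext i j
  simp [lineMapPoly, lineMap_apply_module', add_comm]

variable [Fintype n] [DecidableEq n]

lemma exists_eval_eq_det_lineMap (P Q : Matrix n n R) :
    ∃ q : R[X], ∀ t, q.eval t = (lineMap P Q t : Matrix n n R).det :=
  ⟨(lineMapPoly P Q).det, fun t => by
    rw [← map_eval_lineMapPoly, ← coe_evalRingHom, RingHom.map_det]; rfl⟩

lemma exists_eval_eq_trace_mul_adjugate_lineMap (P Q P' Q' : Matrix n n R) :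
    ∃ p : R[X], ∀ t, p.eval t =
      (lineMap P' Q' t * (lineMap P Q t : Matrix n n R).adjugate).trace :=
  ⟨(lineMapPoly P' Q' * (lineMapPoly P Q).adjugate).trace, fun t => by
    rw [← map_eval_lineMapPoly, ← map_eval_lineMapPoly, ← coe_evalRingHom,
      AddMonoidHom.map_trace, ← RingHom.mapMatrix_apply, map_mul, RingHom.map_adjugate]; rfl⟩

end Matrix

lemma Module.Basis.trace_mul_det_toMatrix {R V ι : Type*} [CommRing R] [AddCommGroup V]
    [Module R V] [Fintype ι] [DecidableEq ι] (b : Basis ι R V) (e : ι → V) (f : End R V) :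
    LinearMap.trace R V f * (b.toMatrix e).det =
      (b.toMatrix (f ∘ e) * (b.toMatrix e).adjugate).trace := by
  have hcol : LinearMap.toMatrix b b f * b.toMatrix e = b.toMatrix (f ∘ e) := by
    ext i j
    simp only [Matrix.mul_apply, Basis.toMatrix_apply, Function.comp_apply,
      ← LinearMap.toMatrix_mulVec_repr b b f]
    rfl
  rw [← hcol, Matrix.mul_assoc, Matrix.mul_adjugate, Matrix.mul_smul, Matrix.mul_one,
    Matrix.trace_smul, LinearMap.trace_eq_matrix_trace R b, smul_eq_mul, mul_comm]

lemma Module.Basis.toMatrix_lineMap {R V ι ι' : Type*} [CommRing R] [AddCommGroup V]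
    [Module R V] (b : Basis ι R V) (x y : ι' → V) (t : R) :
    b.toMatrix (fun i => lineMap (x i) (y i) t) = lineMap (b.toMatrix x) (b.toMatrix y) t := by
  ext i j
  simp [Basis.toMatrix_apply, lineMap_apply_module]

lemma smul_lineMap {R V G : Type*} [Ring R] [AddCommGroup V] [Module R V] [Monoid G]
    [DistribMulAction G V] [SMulCommClass G R V] (g : G) (v w : V) (t : R) :
    g • lineMap v w t = lineMap (g • v) (g • w) t := by
  simp only [lineMap_apply_module, smul_add, smul_comm g]

lemma Polynomial.exists_eq_C_mul_of_mapsTo_finite {K : Type*} [Field K] {p q : K[X]}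
    {S T : Set K} (hS : S.Infinite) (hT : T.Finite) (hq : ∀ t ∈ S, q.eval t ≠ 0)
    (hpq : Set.MapsTo (fun t => p.eval t / q.eval t) S T) : ∃ y, p = C y * q := by
  obtain ⟨y, hy⟩ : ∃ y, (S ∩ (fun t => p.eval t / q.eval t) ⁻¹' {y}).Infinite := by
    by_contra! h
    refine hS ((hT.biUnion fun y _ => h y).subset fun t ht => ?_)
    exact Set.mem_biUnion (hpq ht) ⟨ht, rfl⟩
  refine ⟨y, eq_of_infinite_eval_eq _ _ (hy.mono fun t ht => ?_)⟩
  rw [Set.mem_ofPred_eq, eval_mul, eval_C, ← div_eq_iff (hq t ht.1)]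
  exact ht.2

section Line

variable {K V G : Type*} [Field K] [AddCommGroup V] [Module K V] [FiniteDimensional K V]
  [Group G] [DistribMulAction G V] [SMulCommClass G K V]

-- Coordinates are taken in a basis `c i • lineMap v w t₀` drawn from the orbit, so that the family
-- `c i • lineMap v w t` has determinant `1` at `t₀` and coordinate matrices affine in `t`.
theorem exists_trace_mul_eval_eq_eval_lineMap (π : Equiv.Perm G) {v w : V} {t₀ : K}
    (h₀ : Submodule.span K (MulAction.orbit G (lineMap v w t₀ : V)) = ⊤) :
    ∃ p q : K[X], q.eval t₀ ≠ 0 ∧ ∀ t, q.eval t ≠ 0 →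
      Submodule.span K (MulAction.orbit G (lineMap v w t : V)) = ⊤ ∧
      ∀ f : End K V, (∀ g : G, f (g • lineMap v w t) = π g • lineMap v w t) →
        LinearMap.trace K V f * q.eval t = p.eval t := by
  classical
  obtain ⟨κ, c, -, hspan, hli⟩ := exists_linearIndependent' K fun g : G => g • lineMap v w t₀
  let b := Basis.mk hli (by rw [hspan]; exact h₀.ge)
  have : Fintype κ := @Fintype.ofFinite _ (Module.Finite.finite_basis b)
  have hE (t : K) : b.toMatrix (fun i => c i • lineMap v w t) =
      lineMap (b.toMatrix fun i => c i • v) (b.toMatrix fun i => c i • w) t := by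
    simp only [smul_lineMap, Basis.toMatrix_lineMap]
  have hF (t : K) : b.toMatrix (fun i => π (c i) • lineMap v w t) =
      lineMap (b.toMatrix fun i => π (c i) • v) (b.toMatrix fun i => π (c i) • w) t := by
    simp only [smul_lineMap, Basis.toMatrix_lineMap]
  obtain ⟨q, hq⟩ := Matrix.exists_eval_eq_det_lineMap
    (b.toMatrix fun i => c i • v) (b.toMatrix fun i => c i • w)
  obtain ⟨p, hp⟩ := Matrix.exists_eval_eq_trace_mul_adjugate_lineMap
    (b.toMatrix fun i => c i • v) (b.toMatrix fun i => c i • w)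
    (b.toMatrix fun i => π (c i) • v) (b.toMatrix fun i => π (c i) • w)
  refine ⟨p, q, ?_, fun t ht => ⟨?_, fun f hf => ?_⟩⟩
  · have hb : (fun i => c i • lineMap v w t₀) = b := by ext i; simp [b]
    rw [hq, ← hE, hb, b.toMatrix_self, Matrix.det_one]
    exact one_ne_zero
  · rw [hq, ← hE] at ht
    have hbasis := b.is_basis_iff_det.2 (by rw [Basis.det_apply]; exact isUnit_iff_ne_zero.2 ht)
    refine top_unique (hbasis.2.symm.trans_le (Submodule.span_mono ?_))
    rintro _ ⟨i, rfl⟩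
    exact MulAction.mem_orbit _ _
  · rw [hq, hp, ← hE, ← hF, b.trace_mul_det_toMatrix]
    congr 3
    exact funext fun i => hf (c i)

theorem exists_trace_eq_on_lineMap [Infinite K] [Finite G] {π : Equiv.Perm G}
    (hπ : ∀ u : V, Submodule.span K (MulAction.orbit G u) = ⊤ →
      ∃ A : V ≃ₗ[K] V, ∀ g : G, A (g • u) = π g • u)
    {v w : V} {t₀ : K} (h₀ : Submodule.span K (MulAction.orbit G (lineMap v w t₀ : V)) = ⊤) :
    ∃ (y : K) (q : K[X]), q.eval t₀ ≠ 0 ∧ ∀ t, q.eval t ≠ 0 →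
      Submodule.span K (MulAction.orbit G (lineMap v w t : V)) = ⊤ ∧
      ∀ f : End K V, (∀ g : G, f (g • lineMap v w t) = π g • lineMap v w t) →
        LinearMap.trace K V f = y := by
  obtain ⟨p, q, hq₀, H⟩ := exists_trace_mul_eval_eq_eval_lineMap π h₀
  have hq : q ≠ 0 := by rintro rfl; simp at hq₀
  obtain ⟨y, rfl⟩ : ∃ y, p = C y * q := by
    refine exists_eq_C_mul_of_mapsTo_finite (finite_setOfPred_isRoot hq).infinite_compl
      (End.finite_trace_of_pow_eq_one (V := V) (orderOf_pos π).ne') (fun t ht => ht)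
      fun t ht => ?_
    obtain ⟨A, hA⟩ := hπ _ (H t ht).1
    exact ⟨A, End.pow_eq_one_of_span_orbit_eq_top (H t ht).1 hA (pow_orderOf_eq_one π),
      eq_div_of_mul_eq ht ((H t ht).2 A hA)⟩
  refine ⟨y, q, hq₀, fun t ht => ⟨(H t ht).1, fun f hf => ?_⟩⟩
  have htrace := (H t ht).2 f hf
  rw [eval_mul, eval_C] at htrace
  exact mul_right_cancel₀ ht htrace

end Line

/-- For a generic symmetry `π ∈ Sym(G,V)`, the trace of `D_v(π)` is
independent of the choice of the generator `v ∈ Gen(V)`. -/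
theorem trace_of_generic_sym_independent_of_generator
    {k G V : Type*} [Field k] [Infinite k] [Group G] [Finite G]
    [AddCommGroup V] [Module k V] [FiniteDimensional k V]
    [DistribMulAction G V] [SMulCommClass G k V]
    (π : Equiv.Perm G)
    (hπ : ∀ u : V, Submodule.span k (MulAction.orbit G u) = ⊤ →
      ∃ A : V ≃ₗ[k] V, ∀ g : G, A (g • u) = π g • u)
    (v w : V)
    (hv : Submodule.span k (MulAction.orbit G v) = ⊤)
    (hw : Submodule.span k (MulAction.orbit G w) = ⊤)
    (A B : V ≃ₗ[k] V)
    (hA : ∀ g : G, A (g • v) = π g • v)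
    (hB : ∀ g : G, B (g • w) = π g • w) :
    LinearMap.trace k V A.toLinearMap = LinearMap.trace k V B.toLinearMap := by
  obtain ⟨y₀, q₀, hq₀, H₀⟩ := exists_trace_eq_on_lineMap hπ (v := v) (w := w) (t₀ := 0)
    (by simpa using hv)
  obtain ⟨y₁, q₁, hq₁, H₁⟩ := exists_trace_eq_on_lineMap hπ (v := v) (w := w) (t₀ := 1)
    (by simpa using hw)
  have hq : q₀ * q₁ ≠ 0 := mul_ne_zero (by rintro rfl; simp at hq₀) (by rintro rfl; simp at hq₁)
  obtain ⟨t, ht⟩ := (finite_setOfPred_isRoot hq).infinite_compl.nonempty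
  rw [Set.mem_compl_iff, Set.mem_ofPred_eq, IsRoot, eval_mul] at ht
  obtain ⟨D, hD⟩ := hπ _ (H₀ t (left_ne_zero_of_mul ht)).1
  calc LinearMap.trace k V A = y₀ := (H₀ 0 hq₀).2 A (by simpa using hA)
    _ = LinearMap.trace k V D := ((H₀ t (left_ne_zero_of_mul ht)).2 D hD).symm
    _ = y₁ := (H₁ t (right_ne_zero_of_mul ht)).2 D hD
    _ = LinearMap.trace k V B := ((H₁ 1 hq₁).2 B (by simpa using hB)).symm
end

section
/- Let v be a generator of the kG-module V and π a permutation of G, extended linearly to the group algebra kG. Then π is an orbit symmetry for v if and only if π(Ann(v)) ⊆ Ann(v), where Ann(v) = {a ∈ kG : av = 0} is the annihilator left ideal of v. -/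
/-!
The map `Φ : kG → V`, `a ↦ a v`, is onto with kernel `Ann(v)`, so `V ≅ kG ⧸ Ann(v)`. An orbit
symmetry `A` is exactly a linear automorphism with `A ∘ Φ = Φ ∘ π`, and such an `A` exists iff the
automorphism `π` of `kG` descends to the quotient, i.e. maps `Ann(v)` onto itself. Since `kG` is
finite-dimensional, `π(Ann(v)) ⊆ Ann(v)` already forces equality.
-/

open MonoidAlgebra

theorem MonoidAlgebra.mapDomainLinearEquiv_apply {R M N : Type*} [Semiring R] (e : M ≃ N)
    (a : MonoidAlgebra R M) : mapDomainLinearEquiv R R e a = mapDomain e a := by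
  ext; simp [Finsupp.equivMapDomain_eq_mapDomain]

theorem Submodule.map_linearEquiv_eq_of_le {R M : Type*} [Semiring R] [AddCommMonoid M]
    [Module R M] [IsArtinian R M] (P : M ≃ₗ[R] M) {K : Submodule R M}
    (h : K.map (P : M →ₗ[R] M) ≤ K) : K.map (P : M →ₗ[R] M) = K := by
  refine le_antisymm h fun y hy => ?_
  let f : K →ₗ[R] K := (P : M →ₗ[R] M).restrict fun x hx => h ⟨x, hx, rfl⟩
  have hf : Function.Injective f := fun a b hab =>
    Subtype.ext (P.injective (congrArg Subtype.val hab))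
  obtain ⟨x, hx⟩ := IsArtinian.surjective_of_injective_endomorphism f hf ⟨y, hy⟩
  exact ⟨x, x.2, congrArg Subtype.val hx⟩

theorem LinearMap.exists_linearEquiv_apply_eq_iff {R M V : Type*} [Ring R] [AddCommGroup M]
    [Module R M] [IsArtinian R M] [AddCommGroup V] [Module R V] {Φ : M →ₗ[R] V}
    (hΦ : Function.Surjective Φ) (P : M ≃ₗ[R] M) :
    (∃ A : V ≃ₗ[R] V, ∀ x, A (Φ x) = Φ (P x)) ↔ ∀ x, Φ x = 0 → Φ (P x) = 0 := by
  refine ⟨fun ⟨A, hA⟩ x hx => by rw [← hA, hx, map_zero], fun h => ?_⟩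
  have hP : (ker Φ).map (P : M →ₗ[R] M) = ker Φ :=
    Submodule.map_linearEquiv_eq_of_le P <| by rintro _ ⟨x, hx, rfl⟩; exact h x hx
  let e := Φ.quotKerEquivOfSurjective hΦ
  refine ⟨e.symm ≪≫ₗ Submodule.Quotient.equiv _ _ P hP ≪≫ₗ e, fun x => ?_⟩
  have hx : e.symm (Φ x) = Submodule.Quotient.mk x := e.symm_apply_eq.mpr rfl
  simp only [LinearEquiv.trans_apply, hx, Submodule.Quotient.equiv_apply]
  rfl

namespace Representation

variable {k G V : Type*} [CommRing k] [Monoid G] [AddCommGroup V] [Module k V]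
  (ρ : Representation k G V) (v : V)

/-- `a ↦ a v`, whose kernel is the annihilator `Ann(v)`. -/
noncomputable def evalAt : MonoidAlgebra k G →ₗ[k] V :=
  LinearMap.applyₗ v ∘ₗ ρ.asAlgebraHom.toLinearMap

@[simp]
theorem evalAt_apply (a : MonoidAlgebra k G) : ρ.evalAt v a = ρ.asAlgebraHom a v := rfl

variable {ρ v}

theorem evalAt_surjective (hv : Submodule.span k (Set.range fun g : G => ρ g v) = ⊤) :
    Function.Surjective (ρ.evalAt v) := by
  rw [← LinearMap.range_eq_top, ← top_le_iff, ← hv, Submodule.span_le]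
  rintro _ ⟨g, rfl⟩
  exact ⟨single g 1, by simp⟩

theorem apply_evalAt_eq_iff (A : V →ₗ[k] V) (f : G → G) :
    (∀ a, A (ρ.evalAt v a) = ρ.evalAt v (mapDomain f a)) ↔
      ∀ g, A (ρ g v) = ρ (f g) v := by
  refine ⟨fun h g => by simpa using h (single g 1), fun h => ?_⟩
  suffices A ∘ₗ ρ.evalAt v = ρ.evalAt v ∘ₗ mapDomainLinearMap k k f from
    fun a => LinearMap.congr_fun this a
  refine lhom_ext' fun g => LinearMap.ext fun r => ?_
  simp [h]

end Representation

/-- For a generator `v` of the `kG`-module `V` and a permutation `π` of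
`G` (extended linearly to the group algebra), `π` is an orbit symmetry for `v` iff
`π(Ann(v)) ⊆ Ann(v)`. -/
theorem orbit_sym_iff_maps_annihilator
    {k G V : Type*} [Field k] [Group G] [Finite G]
    [AddCommGroup V] [Module k V]
    (ρ : Representation k G V) (v : V)
    (hv : Submodule.span k (Set.range fun g : G => ρ g v) = ⊤)
    (π : Equiv.Perm G) :
    (∃ A : V ≃ₗ[k] V, ∀ g : G, A (ρ g v) = ρ (π g) v) ↔
    (∀ a : MonoidAlgebra k G, ρ.asAlgebraHom a v = 0 →
      ρ.asAlgebraHom (MonoidAlgebra.mapDomain π a) v = 0) := by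
  calc (∃ A : V ≃ₗ[k] V, ∀ g, A (ρ g v) = ρ (π g) v)
      ↔ ∃ A : V ≃ₗ[k] V, ∀ a, A (ρ.evalAt v a) = ρ.evalAt v (mapDomainLinearEquiv k k π a) := by
        simp only [mapDomainLinearEquiv_apply]
        exact exists_congr fun A => (Representation.apply_evalAt_eq_iff A.toLinearMap π).symm
    _ ↔ _ := by
        simpa only [Representation.evalAt_apply, mapDomainLinearEquiv_apply] using
          LinearMap.exists_linearEquiv_apply_eq_iff (Representation.evalAt_surjective hv)
            (mapDomainLinearEquiv k k π)
end

section
/- Let χ be an irreducible complex character of G with kernel K. Then the generic symmetry group of χ equals { π ∈ Sym(G) : π(gK) = π(1)gK for all g ∈ G }, and the extended character satisfies χ̂(π) = χ(π(1)) for all generic symmetries π. -/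
/-!
A permutation `π` is an orbit symmetry of every generator of `V` exactly when
`ρ (π g) = ρ (π 1) * ρ g` for all `g`. One direction takes `A = ρ (π 1)`. Conversely, by
irreducibility every nonzero vector generates `V`; for an eigenvector `v` of `ρ g` with eigenvalue
`μ`, the symmetry `A` attached to `v` gives `ρ (π g) v = μ • A v = ρ (π 1) (ρ g v)`, and since
`ρ g` has finite order it is diagonalizable, so these eigenvectors span `V`.

The kernel `K` of the character is `ker ρ`: the eigenvalues of `ρ y` are roots of unity, so their
sum equals `dim V` only if all of them are `1`. Hence `ρ (π g) = ρ (π 1) * ρ g` says precisely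
that `π` maps each coset `gK` onto `π(1)gK`. Finally, an `A` as in the definition agrees with
`ρ (π 1)` on the spanning orbit of `w`, so `χ̂(π) = χ(π(1))`.
-/

open Polynomial Function

lemma Complex.eq_one_of_re_eq_one_of_norm_le_one {z : ℂ} (hre : z.re = 1) (hz : ‖z‖ ≤ 1) :
    z = 1 := by
  have him : z.im ^ 2 ≤ 0 := by
    have hnorm := Complex.sq_norm z
    rw [Complex.normSq_apply, hre] at hnorm
    nlinarith [norm_nonneg z]
  exact Complex.ext hre ((pow_eq_zero_iff two_ne_zero).mp (le_antisymm him (sq_nonneg _)))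

lemma Multiset.eq_one_of_sum_eq_card_of_norm_le_one {s : Multiset ℂ} (hs : ∀ z ∈ s, ‖z‖ ≤ 1)
    (hsum : s.sum = s.card) {z : ℂ} (hz : z ∈ s) : z = 1 := by
  by_contra hne
  have hre_le : ∀ x ∈ s, x.re ≤ 1 := fun x hx => (Complex.re_le_norm x).trans (hs x hx)
  have hre_lt : z.re < 1 := (hre_le z hz).lt_of_ne
    fun h => hne (Complex.eq_one_of_re_eq_one_of_norm_le_one h (hs z hz))
  have hlt := Multiset.sum_lt_sum hre_le ⟨z, hz, hre_lt⟩
  have hre_sum : (s.map Complex.re).sum = s.sum.re :=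
    (map_multiset_sum Complex.reAddGroupHom s).symm
  simp [hre_sum, hsum] at hlt

lemma Equiv.Perm.forall_image_fiber_eq_iff_semiconj {α β : Type*} (π : Equiv.Perm α) (f : α → β)
    {φ : β → β} (hφ : Injective φ) :
    (∀ a, π '' {x | f x = f a} = {x | f x = φ (f a)}) ↔ Semiconj f π φ := by
  refine ⟨fun h a => ?_, fun h a => ?_⟩
  · have hmem : π a ∈ π '' {x | f x = f a} := Set.mem_image_of_mem π rfl
    rwa [h a] at hmem
  · ext y
    refine ⟨?_, fun hy => ⟨π.symm y, hφ ?_, π.apply_symm_apply y⟩⟩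
    · rintro ⟨x, hx, rfl⟩
      exact (h x).trans (congrArg φ hx)
    · exact (h _).symm.trans (by rwa [π.apply_symm_apply])

namespace Module.End

section Field

variable {K V : Type*} [Field K] [AddCommGroup V] [Module K V]

lemma isSemisimple_of_isOfFinOrder [CharZero K] {f : End K V} (hf : IsOfFinOrder f) :
    f.IsSemisimple := by
  obtain ⟨n, hn, hfn⟩ := hf.exists_pow_eq_one
  have hn' : IsUnit (n : K) := isUnit_iff_ne_zero.mpr (Nat.cast_ne_zero.mpr hn.ne')
  exact isSemisimple_of_squarefree_aeval_eq_zero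
    (separable_X_pow_sub_C_unit 1 hn').squarefree (by simp [hfn])

lemma HasEigenvalue.pow_eq_one_of_pow_eq_one {f : End K V} {n : ℕ} (hf : f ^ n = 1) {μ : K}
    (hμ : f.HasEigenvalue μ) : μ ^ n = 1 := by
  obtain ⟨v, hv⟩ := hμ.exists_hasEigenvector
  have := hv.pow_apply n
  rw [hf, one_apply] at this
  exact smul_left_injective K hv.2 (by simpa using this.symm)

lemma eq_one_of_forall_hasEigenvalue_eq_one [IsAlgClosed K] [FiniteDimensional K V]
    {f : End K V} (hf : f.IsSemisimple) (h : ∀ μ, f.HasEigenvalue μ → μ = 1) : f = 1 := by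
  have htop : f.eigenspace 1 = ⊤ := by
    refine top_le_iff.mp (hf.iSup_eigenspace_eq_top ▸ iSup_le fun μ => ?_)
    by_cases hμ : f.HasEigenvalue μ
    · exact (h μ hμ) ▸ le_rfl
    · exact (not_not.mp hμ).le.trans bot_le
  ext v
  simpa using mem_eigenspace_iff.mp (htop ▸ Submodule.mem_top : v ∈ f.eigenspace 1)

end Field

variable {V : Type*} [AddCommGroup V] [Module ℂ V] [FiniteDimensional ℂ V]

lemma eq_one_of_isOfFinOrder_of_trace_eq_finrank {f : End ℂ V} (hf : IsOfFinOrder f)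
    (htr : LinearMap.trace ℂ V f = Module.finrank ℂ V) : f = 1 := by
  obtain ⟨n, hn, hfn⟩ := hf.exists_pow_eq_one
  have hsplit := IsAlgClosed.splits f.charpoly
  have hsum : f.charpoly.roots.sum = f.charpoly.roots.card := by
    rw [← trace_eq_sum_roots_charpoly_of_splits hsplit, htr, splits_iff_card_roots.mp hsplit,
      LinearMap.charpoly_natDegree]
  refine eq_one_of_forall_hasEigenvalue_eq_one (isSemisimple_of_isOfFinOrder hf)
    fun μ hμ => Multiset.eq_one_of_sum_eq_card_of_norm_le_one (fun z hz => ?_) hsum ?_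
  · have hz' := (hasEigenvalue_iff_isRoot_charpoly f z).mpr (isRoot_of_mem_roots hz)
    exact (Complex.norm_eq_one_of_pow_eq_one (hz'.pow_eq_one_of_pow_eq_one hfn) hn.ne').le
  · exact mem_roots'.mpr ⟨f.charpoly_monic.ne_zero, (hasEigenvalue_iff_isRoot_charpoly f μ).mp hμ⟩

end Module.End

namespace Representation

open Submodule

section Monoid

variable {k G V : Type*} [CommSemiring k] [Monoid G] [AddCommMonoid V] [Module k V]
  (ρ : Representation k G V)

/-- `π ∈ Sym(G, ρ)` in the paper's notation. -/
def IsGenericSymmetry (π : Equiv.Perm G) : Prop :=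
  ∀ w : V, span k (Set.range fun g : G => ρ g w) = ⊤ →
    ∃ A : V ≃ₗ[k] V, ∀ g : G, A (ρ g w) = ρ (π g) w

lemma span_orbit_eq_top_of_ne_zero
    (hirr : ∀ W : Submodule k V, (∀ g : G, ∀ x ∈ W, ρ g x ∈ W) → W = ⊥ ∨ W = ⊤)
    {w : V} (hw : w ≠ 0) : span k (Set.range fun g : G => ρ g w) = ⊤ := by
  refine (hirr _ fun g x hx => ?_).resolve_left fun h => hw ?_
  · have hinv : span k (Set.range fun g : G => ρ g w) ≤
        (span k (Set.range fun g : G => ρ g w)).comap (ρ g) :=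
      span_le.mpr <| Set.range_subset_iff.mpr fun h => subset_span ⟨g * h, by simp⟩
    exact hinv hx
  · simpa [h] using (subset_span ⟨1, by simp⟩ : w ∈ span k (Set.range fun g : G => ρ g w))

end Monoid

section Group

variable {k G V : Type*} [CommSemiring k] [Group G] [AddCommMonoid V] [Module k V]
  (ρ : Representation k G V)

lemma isGenericSymmetry_of_semiconj {π : Equiv.Perm G} (h : Semiconj ρ π (ρ (π 1) * ·)) :
    ρ.IsGenericSymmetry π := by
  intro w _
  exact ⟨LinearMap.GeneralLinearGroup.generalLinearEquiv k V (ρ.asGroupHom (π 1)), fun g => by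
    rw [h g]; rfl⟩

end Group

section Finite

variable {k G V : Type*} [Field k] [IsAlgClosed k] [CharZero k] [Group G] [Finite G]
  [AddCommGroup V] [Module k V] [FiniteDimensional k V] (ρ : Representation k G V)

lemma semiconj_of_isGenericSymmetry
    (hirr : ∀ W : Submodule k V, (∀ g : G, ∀ x ∈ W, ρ g x ∈ W) → W = ⊥ ∨ W = ⊤)
    {π : Equiv.Perm G} (hπ : ρ.IsGenericSymmetry π) : Semiconj ρ π (ρ (π 1) * ·) := by
  intro g
  have hss : Module.End.IsSemisimple (ρ g) :=
    Module.End.isSemisimple_of_isOfFinOrder (ρ.isOfFinOrder (isOfFinOrder_of_finite g))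
  have heig : ∀ μ, Module.End.eigenspace (ρ g) μ ≤
      LinearMap.eqLocus (ρ (π g)) (ρ (π 1) * ρ g) := by
    intro μ v hv
    rw [Module.End.mem_eigenspace_iff] at hv
    obtain rfl | hv0 := eq_or_ne v 0
    · exact zero_mem _
    obtain ⟨A, hA⟩ := hπ v (ρ.span_orbit_eq_top_of_ne_zero hirr hv0)
    have h1 : A v = ρ (π 1) v := by simpa using hA 1
    change ρ (π g) v = ρ (π 1) (ρ g v)
    rw [← hA g, hv, map_smul, h1, map_smul]
  exact LinearMap.eqLocus_eq_top.mp (top_le_iff.mp (hss.iSup_eigenspace_eq_top ▸ iSup_le heig))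

end Finite

variable {G V : Type*} [Group G] [Finite G] [AddCommGroup V] [Module ℂ V] [FiniteDimensional ℂ V]
  (ρ : Representation ℂ G V)

lemma trace_eq_trace_one_iff (g : G) :
    LinearMap.trace ℂ V (ρ g) = LinearMap.trace ℂ V (ρ 1) ↔ ρ g = 1 := by
  refine ⟨fun h => ?_, fun h => by rw [h, map_one ρ]⟩
  refine Module.End.eq_one_of_isOfFinOrder_of_trace_eq_finrank
    (ρ.isOfFinOrder (isOfFinOrder_of_finite g)) ?_
  rw [h, map_one, LinearMap.trace_one]

lemma trace_inv_mul_eq_trace_one_iff (g x : G) :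
    LinearMap.trace ℂ V (ρ (g⁻¹ * x)) = LinearMap.trace ℂ V (ρ 1) ↔ ρ x = ρ g := by
  rw [trace_eq_trace_one_iff, ← MonoidHom.mem_ker, ← MonoidHom.eq_iff]

end Representation

theorem generic_sym_of_irreducible_character_general
    {G : Type*} [Group G] [Finite G]
    (V : Type*) [AddCommGroup V] [Module ℂ V] [FiniteDimensional ℂ V]
    (ρ : Representation ℂ G V)
    (hirr : ∀ W : Submodule ℂ V, (∀ g : G, ∀ x ∈ W, ρ g x ∈ W) → W = ⊥ ∨ W = ⊤) :
    ({π : Equiv.Perm G |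
        ∀ w : V, Submodule.span ℂ (Set.range fun g : G => ρ g w) = ⊤ →
          ∃ A : V ≃ₗ[ℂ] V, ∀ g : G, A (ρ g w) = ρ (π g) w} =
      {π : Equiv.Perm G | ∀ g : G,
        ⇑π '' {x : G | LinearMap.trace ℂ V (ρ (g⁻¹ * x)) = LinearMap.trace ℂ V (ρ 1)} =
          {x : G | LinearMap.trace ℂ V (ρ ((π 1 * g)⁻¹ * x)) =
            LinearMap.trace ℂ V (ρ 1)}}) ∧
    (∀ π : Equiv.Perm G,
      (∀ w : V, Submodule.span ℂ (Set.range fun g : G => ρ g w) = ⊤ →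
        ∃ A : V ≃ₗ[ℂ] V, ∀ g : G, A (ρ g w) = ρ (π g) w) →
      ∀ w : V, Submodule.span ℂ (Set.range fun g : G => ρ g w) = ⊤ →
        ∀ A : V ≃ₗ[ℂ] V, (∀ g : G, A (ρ g w) = ρ (π g) w) →
          LinearMap.trace ℂ V A.toLinearMap = LinearMap.trace ℂ V (ρ (π 1))) := by
  refine ⟨?_, fun π hπ w hw A hA => ?_⟩
  · ext π
    have hmul : Injective (ρ (π 1) * ·) :=
      ((Group.isUnit (π 1)).map ρ).mul_right_injective
    simp_rw [Set.mem_ofPred_eq, ρ.trace_inv_mul_eq_trace_one_iff, map_mul]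
    rw [Equiv.Perm.forall_image_fiber_eq_iff_semiconj π ρ hmul]
    exact ⟨ρ.semiconj_of_isGenericSymmetry hirr, ρ.isGenericSymmetry_of_semiconj⟩
  · have hsemi := ρ.semiconj_of_isGenericSymmetry hirr hπ
    have hA' : A.toLinearMap = ρ (π 1) := LinearMap.ext_on hw <| Set.forall_mem_range.mpr
      fun g => (hA g).trans (LinearMap.congr_fun (hsemi g) w)
    rw [hA']

/-- For an irreducible complex character `χ` with kernel `K`, the generic
symmetry group of `χ` is `{π | π(gK) = π(1)gK for all g}`, and `χ̂(π) = χ(π(1))` for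
every generic symmetry `π`. -/
theorem generic_sym_of_irreducible_character
    {G : Type*} [Group G] [Finite G]
    (V : Type*) [AddCommGroup V] [Module ℂ V] [FiniteDimensional ℂ V] [Nontrivial V]
    (ρ : Representation ℂ G V)
    (hirr : ∀ W : Submodule ℂ V, (∀ g : G, ∀ x ∈ W, ρ g x ∈ W) → W = ⊥ ∨ W = ⊤) :
    ({π : Equiv.Perm G |
        ∀ w : V, Submodule.span ℂ (Set.range fun g : G => ρ g w) = ⊤ →
          ∃ A : V ≃ₗ[ℂ] V, ∀ g : G, A (ρ g w) = ρ (π g) w} =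
      {π : Equiv.Perm G | ∀ g : G,
        ⇑π '' {x : G | LinearMap.trace ℂ V (ρ (g⁻¹ * x)) = LinearMap.trace ℂ V (ρ 1)} =
          {x : G | LinearMap.trace ℂ V (ρ ((π 1 * g)⁻¹ * x)) =
            LinearMap.trace ℂ V (ρ 1)}}) ∧
    (∀ π : Equiv.Perm G,
      (∀ w : V, Submodule.span ℂ (Set.range fun g : G => ρ g w) = ⊤ →
        ∃ A : V ≃ₗ[ℂ] V, ∀ g : G, A (ρ g w) = ρ (π g) w) →
      ∀ w : V, Submodule.span ℂ (Set.range fun g : G => ρ g w) = ⊤ →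
        ∀ A : V ≃ₗ[ℂ] V, (∀ g : G, A (ρ g w) = ρ (π g) w) →
          LinearMap.trace ℂ V A.toLinearMap = LinearMap.trace ℂ V (ρ (π 1))) :=
  generic_sym_of_irreducible_character_general V ρ hirr
end
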